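/- arXiv:2001.10199 — 2 statements merged into one kernel-verified Lean document; each statement's English description precedes it below -/
import Mathlib

section
/- The cooperative fog computing objective Σ_{i=1}^N R_i(φ), where R_i(φ) = τ^u_i + (1/Λ)·Σ_j φ_{ij}·(τ_{ij} + 1/(μ_j − Σ_k φ_{kj})) + φ_{ic}·τ^c with Λ = Σ_i λ_i, is a convex function of the matrix φ = (φ_{ij}) on the convex domain {φ ≥ 0 : Σ_k φ_{kj} < μ_j for all j, Σ_{j} φ_{ij} + φ_{ic} = λ_i for all i, φ_{ic} ≥ 0}. -/
/-!
Expanding the objective, the user-to-fog, fog-to-fog and cloud terms are affine in `φ`, and the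
queueing terms regroup node by node: `∑ i, φ i j / (μ j - L j) = L j / (μ j - L j)` with
`L j = ∑ k, φ k j` the load on node `j`. Since `x / (c - x) = c / (c - x) - 1` is convex on
`x < c` when `c ≥ 0`, each regrouped term is a convex function of a linear function of `φ`.
The domain is an orthant cut by open half-spaces and affine hyperplanes, hence convex.
-/

open Finset Set

theorem ConvexOn.sum {𝕜 E β ι : Type*} [Semiring 𝕜] [PartialOrder 𝕜] [AddCommMonoid E]
    [AddCommMonoid β] [PartialOrder β] [IsOrderedAddMonoid β] [SMul 𝕜 E] [Module 𝕜 β]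
    {s : Set E} {t : Finset ι} {f : ι → E → β} (hs : Convex 𝕜 s)
    (h : ∀ i ∈ t, ConvexOn 𝕜 s (f i)) : ConvexOn 𝕜 s fun x => ∑ i ∈ t, f i x := by
  classical
  induction t using Finset.induction_on with
  | empty => simpa using convexOn_const (0 : β) hs
  | insert i t hi ih =>
    simp_rw [sum_insert hi]
    exact (h i (mem_insert_self i t)).add (ih fun j hj => h j (mem_insert_of_mem hj))

theorem convexOn_div_const_sub {c : ℝ} (hc : 0 ≤ c) :
    ConvexOn ℝ (Iio c) fun x => x / (c - x) := by
  have hinv : ConvexOn ℝ (Ioi 0) fun y : ℝ => c * y⁻¹ - 1 :=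
    (((convexOn_zpow (-1)).smul hc).add_const (-1)).congr fun y _ => by
      simp [sub_eq_add_neg]
  have hdom : (-LinearMap.id : ℝ →ₗ[ℝ] ℝ) ⁻¹' ((c + ·) ⁻¹' Ioi 0) = Iio c := by
    ext x; simp
  have h := (hinv.translate_right c).comp_linearMap (-LinearMap.id)
  rw [hdom] at h
  refine h.congr fun x hx => ?_
  have hx : c - x ≠ 0 := sub_ne_zero.2 (ne_of_gt hx)
  change c * (c + -x)⁻¹ - 1 = x / (c - x)
  rw [← sub_eq_add_neg]
  field_simp
  ring

namespace FogOffload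

variable {ι κ : Type*} [Fintype ι] [Fintype κ]

def nodeLoad (j : κ) : (ι → κ → ℝ) × (ι → ℝ) →ₗ[ℝ] ℝ where
  toFun p := ∑ k, p.1 k j
  map_add' p q := by simp [sum_add_distrib]
  map_smul' c p := by simp [mul_sum]

def dispatchedLoad (i : ι) : (ι → κ → ℝ) × (ι → ℝ) →ₗ[ℝ] ℝ where
  toFun p := ∑ j, p.1 i j + p.2 i
  map_add' p q := by simp only [Prod.fst_add, Prod.snd_add, Pi.add_apply, sum_add_distrib]; ring
  map_smul' c p := by simp [mul_sum, mul_add]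

def feasibleSet (μ : κ → ℝ) (lam : ι → ℝ) : Set ((ι → κ → ℝ) × (ι → ℝ)) :=
  {p | (∀ i j, 0 ≤ p.1 i j) ∧ (∀ i, 0 ≤ p.2 i) ∧
    (∀ j, ∑ k, p.1 k j < μ j) ∧ (∀ i, ∑ j, p.1 i j + p.2 i = lam i)}

theorem feasibleSet_eq (μ : κ → ℝ) (lam : ι → ℝ) :
    feasibleSet μ lam =
      Set.Ici 0 ∩ ((⋂ j, nodeLoad j ⁻¹' Iio (μ j)) ∩ ⋂ i, dispatchedLoad i ⁻¹' {lam i}) := by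
  ext p
  simp [feasibleSet, nodeLoad, dispatchedLoad, Prod.le_def, Pi.le_def, and_assoc]

theorem convex_feasibleSet (μ : κ → ℝ) (lam : ι → ℝ) : Convex ℝ (feasibleSet μ lam) := by
  rw [feasibleSet_eq]
  exact (convex_Ici 0).inter <|
    (convex_iInter fun j => (convex_Iio _).linear_preimage _).inter
      (convex_iInter fun i => (convex_singleton _).linear_preimage _)

theorem convexOn_sum_nodeLoad_div {s : Set ((ι → κ → ℝ) × (ι → ℝ))} (hs : Convex ℝ s)
    {μ : κ → ℝ} (hμ : ∀ j, 0 ≤ μ j) (hload : ∀ p ∈ s, ∀ j, nodeLoad j p < μ j) :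
    ConvexOn ℝ s fun p => ∑ j, nodeLoad j p / (μ j - nodeLoad j p) :=
  ConvexOn.sum hs fun j _ =>
    ((convexOn_div_const_sub (hμ j)).comp_linearMap (nodeLoad j)).subset
      (fun p hp => hload p hp j) hs

end FogOffload

open FogOffload in
theorem coop_fog_objective_convex_general (N : ℕ) (μ lam τu : Fin N → ℝ)
    (τ : Fin N → Fin N → ℝ) (τc : ℝ)
    (hμ : ∀ j, 0 < μ j) (hlam : ∀ i, 0 < lam i) :
    let Λ : ℝ := ∑ i, lam i
    let D : Set ((Fin N → Fin N → ℝ) × (Fin N → ℝ)) :=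
      {p | (∀ i j, 0 ≤ p.1 i j) ∧ (∀ i, 0 ≤ p.2 i) ∧
           (∀ j, ∑ k, p.1 k j < μ j) ∧ (∀ i, ∑ j, p.1 i j + p.2 i = lam i)}
    Convex ℝ D ∧
    ConvexOn ℝ D (fun p =>
      ∑ i, (τu i + (1 / Λ) * ∑ j, p.1 i j * (τ i j + 1 / (μ j - ∑ k, p.1 k j))
              + p.2 i * τc)) := by
  intro Λ D
  have hD : Convex ℝ D := convex_feasibleSet μ lam
  have hΛ : 0 ≤ 1 / Λ := one_div_nonneg.2 (sum_nonneg fun i _ => (hlam i).le)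
  have hcongestion := (convexOn_sum_nodeLoad_div hD (fun j => (hμ j).le)
    fun p hp => hp.2.2.1).smul hΛ
  have htransfer : IsLinearMap ℝ fun p : (Fin N → Fin N → ℝ) × (Fin N → ℝ) =>
      (1 / Λ) * ∑ i, ∑ j, p.1 i j * τ i j + τc * ∑ i, p.2 i := by
    constructor
    · intro p q
      simp only [Prod.fst_add, Prod.snd_add, Pi.add_apply, add_mul, sum_add_distrib]
      ring
    · intro c p
      simp only [Prod.smul_fst, Prod.smul_snd, Pi.smul_apply, smul_eq_mul, mul_assoc, ← mul_sum]
      ring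
  refine ⟨hD, (((htransfer.mk' _).convexOn hD).add hcongestion |>.add_const (∑ i, τu i)).congr
    fun p _ => ?_⟩
  have hregroup : ∑ i, ∑ j, p.1 i j * (1 / (μ j - ∑ k, p.1 k j))
      = ∑ j, nodeLoad j p / (μ j - nodeLoad j p) := by
    rw [sum_comm]
    simp [nodeLoad, ← sum_mul, div_eq_mul_inv]
  simp only [Pi.add_apply, IsLinearMap.mk'_apply, smul_eq_mul, mul_add, sum_add_distrib,
    ← mul_sum, ← sum_mul, hregroup]
  ring

theorem coop_fog_objective_convex (N : ℕ) (μ lam τu τc' : Fin N → ℝ)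
    (τ : Fin N → Fin N → ℝ) (τc : ℝ)
    (hμ : ∀ j, 0 < μ j) (hlam : ∀ i, 0 < lam i) (hτu : ∀ i, 0 ≤ τu i)
    (hτ : ∀ i j, 0 ≤ τ i j) (hτc : 0 ≤ τc) :
    let Λ : ℝ := ∑ i, lam i
    let D : Set ((Fin N → Fin N → ℝ) × (Fin N → ℝ)) :=
      {p | (∀ i j, 0 ≤ p.1 i j) ∧ (∀ i, 0 ≤ p.2 i) ∧
           (∀ j, ∑ k, p.1 k j < μ j) ∧ (∀ i, ∑ j, p.1 i j + p.2 i = lam i)}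
    Convex ℝ D ∧
    ConvexOn ℝ D (fun p =>
      ∑ i, (τu i + (1 / Λ) * ∑ j, p.1 i j * (τ i j + 1 / (μ j - ∑ k, p.1 k j))
              + p.2 i * τc)) :=
  coop_fog_objective_convex_general N μ lam τu τ τc hμ hlam
end

section
/- For an M/M/1 fog node with service rate μ and total processed workload x < μ, the map x ↦ x·(1/(μ − x)) + (λ − x)·τ_f (with 0 ≤ x ≤ λ < μ) attains its minimum over [χ, λ] at max(χ, μ − √(μ/τ_f)) whenever μ·τ_f > 1 and μ − √(μ/τ_f) ≤ λ. -/
theorem workload_constrained_min (μ lam τf χ : ℝ)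
    (hχ : 0 ≤ χ) (hχlam : χ ≤ lam) (hlamμ : lam < μ) (hτf : 0 < τf)
    (hμτf : 1 < μ * τf) (hx₀ : μ - Real.sqrt (μ / τf) ≤ lam) :
    let g : ℝ → ℝ := fun x => x * (1 / (μ - x)) + (lam - x) * τf
    max χ (μ - Real.sqrt (μ / τf)) ∈ Set.Icc χ lam ∧
    ∀ x ∈ Set.Icc χ lam, g (max χ (μ - Real.sqrt (μ / τf))) ≤ g x := by
  intro g
  set s := Real.sqrt (μ / τf) with hs
  have hμ : 0 < μ := by nlinarith
  have hss : s * s = μ / τf := Real.mul_self_sqrt (by positivity)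
  have hτss : τf * (s * s) = μ := by rw [hss]; field_simp
  have hs0 : 0 < s := Real.sqrt_pos.mpr (by positivity)
  set m := max χ (μ - s) with hm
  have hmlam : m ≤ lam := max_le hχlam hx₀
  have hχm : χ ≤ m := le_max_left _ _
  have hmμ : m < μ := lt_of_le_of_lt hmlam hlamμ
  have hms : μ - m ≤ s := by have := le_max_right χ (μ - s); linarith
  refine ⟨⟨hχm, hmlam⟩, ?_⟩
  rintro x ⟨hx1, hx2⟩
  have hxμ : 0 < μ - x := by linarith
  have hmμ' : 0 < μ - m := by linarith
  have key : g x - g m = (x - m) * (μ - τf * (μ - x) * (μ - m)) / ((μ - x) * (μ - m)) := by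
    simp only [g]
    field_simp
    ring
  have hnum : 0 ≤ (x - m) * (μ - τf * (μ - x) * (μ - m)) := by
    rcases le_or_gt m x with hc | hc
    · have h1 : μ - x ≤ μ - m := by linarith
      have h2 : (μ - x) * (μ - m) ≤ s * s :=
        mul_le_mul (by linarith) hms hmμ'.le hs0.le
      apply mul_nonneg (by linarith)
      nlinarith
    · have hmeq : m = μ - s := by
        rcases le_total χ (μ - s) with h | h
        · exact max_eq_right h
        · exfalso
          have hmc : m = χ := max_eq_left h
          linarith
      have hsx : s ≤ μ - x := by rw [hmeq] at hc; linarith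
      have h2 : μ - m = s := by rw [hmeq]; ring
      rw [h2]
      have h3 : μ ≤ τf * (μ - x) * s := by nlinarith
      nlinarith
  have : 0 ≤ g x - g m := by
    rw [key]; positivity
  linarith
end
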